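/- arXiv:1409.7029 — 5 statements merged into one kernel-verified Lean document; each statement's English description precedes it below -/
import Mathlib

section
/- Let g, a, and d be positive integers and let H be a subgroup of (ℤ/dℤ)ˣ of index at most 2g. Then |(1/|H|) Σ_{b∈H} e^{2πiab/d}| ≤ 2g·√(ad)/φ(d), where φ is Euler's totient function. -/
/-!
Write `T(u) = ∑_{b ∈ H} e(ub/d)`. Orthogonality of additive characters gives the Parseval
identity `∑_u |T(u)|² = d |H|`, and `T` is constant on the `H`-orbit `aH`. The map `h ↦ ah` has
fibres of size at most `#{y | ay = 0} ≤ a`, so summing `|T|²` over `aH` counted with multiplicity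
gives `|H| |T(a)|² ≤ a d |H|`, i.e. `|T(a)| ≤ √(ad)`. Finally `φ(d) = |H| [(ℤ/dℤ)ˣ : H] ≤ 2g |H|`.
-/

open Complex Finset

lemma Finset.sum_comp_le_mul_sum {ι κ : Type*} [Fintype ι] [Fintype κ] [DecidableEq κ]
    (g : ι → κ) {f : κ → ℝ} (hf : ∀ k, 0 ≤ f k) {N : ℕ} (hN : ∀ k, #{i | g i = k} ≤ N) :
    ∑ i, f (g i) ≤ N * ∑ k, f k := by
  rw [← sum_fiberwise' univ g f, mul_sum]
  refine sum_le_sum fun k _ => ?_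
  rw [sum_const, nsmul_eq_mul]
  exact mul_le_mul_of_nonneg_right (mod_cast hN k) (hf k)

lemma Subgroup.sum_mul_mul_eq {R M : Type*} [Monoid R] [AddCommMonoid M] (H : Subgroup Rˣ)
    [Fintype H] (f : R → M) (u : R) (h : H) :
    ∑ b : H, f (u * ((h : Rˣ) : R) * ((b : Rˣ) : R)) = ∑ b : H, f (u * ((b : Rˣ) : R)) :=
  Fintype.sum_bijective (h * ·) (Group.mulLeft_bijective h) _ _ fun b => by simp [mul_assoc]

section FiniteRing

variable {R : Type*} [CommRing R] [Fintype R]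

lemma card_filter_mul_eq_le [DecidableEq R] {ι : Type*} [Fintype ι] {c : ι → R}
    (hc : Function.Injective c) (u v : R) :
    #{i | u * c i = v} ≤ #{y : R | u * y = 0} := by
  rcases (filter (fun i => u * c i = v) univ).eq_empty_or_nonempty with h | ⟨i₀, hi₀⟩
  · simp [h]
  refine card_le_card_of_injOn (fun i => c i - c i₀) (fun i hi => ?_)
    fun i _ j _ h => hc (sub_left_inj.mp h)
  simp only [coe_filter, mem_filter, mem_univ, true_and, Set.mem_ofPred_eq] at hi hi₀ ⊢
  rw [mul_sub, hi, hi₀, sub_self]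

variable {ψ : AddChar R ℂ}

lemma AddChar.sum_norm_sq_sum_mul_eq (hψ : ψ.IsPrimitive) {ι : Type*} [Fintype ι]
    {c : ι → R} (hc : Function.Injective c) :
    ∑ u : R, ‖∑ i, ψ (u * c i)‖ ^ 2 = Fintype.card R * Fintype.card ι := by
  classical
  have hexpand : ∀ u : R, (‖∑ i, ψ (u * c i)‖ : ℂ) ^ 2 = ∑ i, ∑ j, ψ (u * (c i - c j)) := by
    intro u
    rw [← Complex.mul_conj', map_sum, sum_mul_sum]
    refine sum_congr rfl fun i _ => sum_congr rfl fun j _ => ?_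
    rw [← AddChar.map_neg_eq_conj, ← AddChar.map_add_eq_mul, mul_sub, sub_eq_add_neg]
  have horth : ∀ i j, ∑ u : R, ψ (u * (c i - c j)) = if i = j then (Fintype.card R : ℂ) else 0 := by
    intro i j
    rw [AddChar.sum_mulShift _ hψ, sub_eq_zero, hc.eq_iff]
    split_ifs <;> simp
  apply Complex.ofReal_injective
  push_cast
  calc ∑ u : R, (‖∑ i, ψ (u * c i)‖ : ℂ) ^ 2 = ∑ i, ∑ j, ∑ u : R, ψ (u * (c i - c j)) := by
        simp_rw [hexpand]
        rw [sum_comm]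
        simp_rw [sum_comm (γ := R)]
    _ = _ := by simp [horth, mul_comm]

theorem AddChar.norm_sq_sum_units_mul_le [DecidableEq R] (hψ : ψ.IsPrimitive)
    (H : Subgroup Rˣ) [Fintype H] (u : R) :
    ‖∑ b : H, ψ (u * ((b : Rˣ) : R))‖ ^ 2 ≤ Fintype.card R * #{y : R | u * y = 0} := by
  set T : R → ℝ := fun v => ‖∑ b : H, ψ (v * ((b : Rˣ) : R))‖ ^ 2
  have hc : Function.Injective fun b : H => ((b : Rˣ) : R) :=
    Units.val_injective.comp Subtype.val_injective
  have hcard : (0 : ℝ) < Fintype.card H := mod_cast Fintype.card_pos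
  refine le_of_mul_le_mul_left ?_ hcard
  calc Fintype.card H * T u = ∑ h : H, T (u * ((h : Rˣ) : R)) := by
        simp [T, Subgroup.sum_mul_mul_eq]
    _ ≤ #{y : R | u * y = 0} * ∑ v, T v :=
        sum_comp_le_mul_sum _ (fun v => by positivity) (card_filter_mul_eq_le hc u)
    _ = Fintype.card H * (Fintype.card R * #{y : R | u * y = 0}) := by
        rw [AddChar.sum_norm_sq_sum_mul_eq hψ hc]; ring

end FiniteRing

lemma ZMod.card_natCast_mul_eq_zero_le (d : ℕ) [NeZero d] {a : ℕ} (ha : 0 < a) :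
    #{y : ZMod d | (a : ZMod d) * y = 0} ≤ a := by
  simpa only [nsmul_eq_mul] using IsAddCyclic.card_nsmul_eq_zero_le (α := ZMod d) ha

lemma ZMod.exp_eq_stdAddChar (d : ℕ) [NeZero d] (a : ℕ) (b : ZMod d) :
    Complex.exp (2 * Real.pi * I * a * b.val / d) = ZMod.stdAddChar ((a : ZMod d) * b) := by
  rw [show (a : ZMod d) * b = ((a * b.val : ℕ) : ZMod d) by simp, ZMod.stdAddChar_apply,
    ZMod.toCircle_natCast]
  push_cast
  ring_nf

theorem stmt3_general (g a d : ℕ) (ha : 0 < a) (hd : 0 < d)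
    (H : Subgroup (ZMod d)ˣ) (hH : H.index ≤ 2 * g) :
    ‖(1 / (Nat.card H : ℂ)) *
        ∑ᶠ b : H, Complex.exp (2 * Real.pi * I * a * ((b : (ZMod d)ˣ) : ZMod d).val / d)‖
      ≤ 2 * g * Real.sqrt (a * d) / Nat.totient d := by
  classical
  have : NeZero d := ⟨hd.ne'⟩
  have hsum : ‖∑ᶠ b : H, Complex.exp (2 * Real.pi * I * a * ((b : (ZMod d)ˣ) : ZMod d).val / d)‖
      ≤ Real.sqrt (a * d) := by
    rw [finsum_eq_sum_of_fintype]
    simp_rw [ZMod.exp_eq_stdAddChar]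
    refine Real.le_sqrt_of_sq_le ((AddChar.norm_sq_sum_units_mul_le
      (ZMod.isPrimitive_stdAddChar d) H _).trans ?_)
    rw [ZMod.card, mul_comm]
    gcongr
    exact_mod_cast ZMod.card_natCast_mul_eq_zero_le d ha
  have htotient : (Nat.totient d : ℝ) ≤ 2 * g * Nat.card H := by
    rw [← ZMod.card_units_eq_totient, ← Nat.card_eq_fintype_card, ← H.card_mul_index, mul_comm]
    push_cast
    gcongr
    exact_mod_cast hH
  have hcard : (0 : ℝ) < Nat.card H := mod_cast Nat.card_pos
  rw [norm_mul, norm_div, norm_one, Complex.norm_natCast, one_div_mul_eq_div,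
    div_le_div_iff₀ hcard (mod_cast Nat.totient_pos.mpr hd)]
  calc _ ≤ Real.sqrt (a * d) * (2 * g * Nat.card H) := by gcongr
    _ = _ := by ring

/-- If `H ≤ (ℤ/dℤ)ˣ` has index at most `2g`, then the normalized exponential sum
`|(1/|H|) Σ_{b∈H} e^{2πiab/d}|` is at most `2g·√(ad)/φ(d)`. -/
theorem stmt3 (g a d : ℕ) (hg : 0 < g) (ha : 0 < a) (hd : 0 < d)
    (H : Subgroup (ZMod d)ˣ) (hH : H.index ≤ 2 * g) :
    ‖(1 / (Nat.card H : ℂ)) *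
        ∑ᶠ b : H, Complex.exp (2 * Real.pi * I * a * ((b : (ZMod d)ˣ) : ZMod d).val / d)‖
      ≤ 2 * g * Real.sqrt (a * d) / Nat.totient d :=
  stmt3_general g a d ha hd H hH
end

section
/- Let d be a positive integer, let χ be a Dirichlet character modulo d, and let a be a positive integer. Then |Σ_{b∈(ℤ/dℤ)ˣ} χ(b) e^{2πiab/d}| ≤ √(ad). -/
/-!
For a finite ring `R` (here `ℤ/dℤ`, with `ψ(x) = e^{2πix/d}` and `n = a`) and
`S(c) = ∑_{b ∈ Rˣ} χ(b) ψ(c b)`, orthogonality of the additive characters `ψ(c ·)` gives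
`∑_c |S(c)|² = |R| |Rˣ|`, and `|S|` is constant on the orbits of `Rˣ` acting on `R` by
multiplication. The stabilizer of `n` embeds, via `u ↦ u - 1`, into the `n`-torsion of the cyclic
group `(R, +)`, so it has at most `n` elements and the orbit of `n` at least `|Rˣ| / n`. Hence
`(|Rˣ| / n) |S(n)|² ≤ |R| |Rˣ|`.
-/

open Complex ComplexConjugate Finset MulAction

lemma card_mul_le_card_stabilizer_mul_sum {G X : Type*} [Group G] [Finite G] [MulAction G X]
    [Fintype X] (f : X → ℝ) (hf₀ : ∀ y, 0 ≤ f y) (hf : ∀ (g : G) y, f (g • y) = f y)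
    (x : X) :
    Nat.card G * f x ≤ Nat.card (stabilizer G x) * ∑ y, f y := by
  classical
  have horbit : ((orbit G x).ncard : ℝ) * f x ≤ ∑ y, f y :=
    calc ((orbit G x).ncard : ℝ) * f x = ∑ y ∈ (orbit G x).toFinset, f y := by
          rw [Set.ncard_eq_toFinset_card', ← nsmul_eq_mul, ← sum_const]
          refine sum_congr rfl fun y hy => ?_
          obtain ⟨g, rfl⟩ := Set.mem_toFinset.mp hy
          exact (hf g x).symm
      _ ≤ ∑ y, f y := sum_le_sum_of_subset_of_nonneg (subset_univ _) fun y _ _ => hf₀ y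
  rw [← Subgroup.card_mul_index, index_stabilizer G x, Nat.cast_mul, mul_assoc]
  exact mul_le_mul_of_nonneg_left horbit (Nat.cast_nonneg _)

lemma card_stabilizer_units_natCast_le {R : Type*} [CommRing R] [Finite R] [IsAddCyclic R]
    {n : ℕ} (hn : 0 < n) : Nat.card (stabilizer Rˣ (n : R)) ≤ n := by
  classical
  have := Fintype.ofFinite R
  let sub_one : stabilizer Rˣ (n : R) → {x : R // n • x = 0} := fun u =>
    ⟨((u : Rˣ) : R) - 1, by
      have hu : ((u : Rˣ) : R) * n = n := mem_stabilizer_iff.mp u.2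
      rw [nsmul_eq_mul, mul_sub, mul_one, mul_comm, hu, sub_self]⟩
  have hinj : Function.Injective sub_one := fun u v huv => by
    have := congrArg (fun x : {x : R // n • x = 0} => (x : R) + 1) huv
    simp only [sub_one, sub_add_cancel, Units.val_inj] at this
    exact Subtype.ext this
  calc Nat.card (stabilizer Rˣ (n : R)) ≤ Nat.card {x : R // n • x = 0} :=
        Nat.card_le_card_of_injective _ hinj
    _ = #{x : R | n • x = 0} := by rw [Nat.card_eq_fintype_card, Fintype.card_subtype]
    _ ≤ n := IsAddCyclic.card_nsmul_eq_zero_le hn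

lemma sum_norm_sq_sum_units_mul_addChar {R : Type*} [CommRing R] [Fintype R] [DecidableEq R]
    {ψ : AddChar R ℂ} (hψ : ψ.IsPrimitive) (f : Rˣ → ℂ) :
    ∑ c : R, ‖∑ b : Rˣ, f b * ψ (c * b)‖ ^ 2 = Fintype.card R * ∑ b, ‖f b‖ ^ 2 := by
  have hexpand (c : R) : (‖∑ b : Rˣ, f b * ψ (c * b)‖ : ℂ) ^ 2
      = ∑ b : Rˣ, ∑ b' : Rˣ, f b * conj (f b') * ψ (c * (b - b')) := by
    rw [← mul_conj', map_sum, sum_mul_sum]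
    refine sum_congr rfl fun b _ => sum_congr rfl fun b' _ => ?_
    rw [map_mul (starRingEnd ℂ), ← AddChar.map_neg_eq_conj, mul_sub, sub_eq_add_neg,
      AddChar.map_add_eq_mul]
    ring
  have horth (b b' : Rˣ) :
      ∑ c : R, ψ (c * (b - b')) = if b = b' then (Fintype.card R : ℂ) else 0 := by
    simp [AddChar.sum_mulShift _ hψ, sub_eq_zero, Units.val_inj]
  apply ofReal_injective
  push_cast
  simp_rw [hexpand]
  rw [sum_comm]
  refine (sum_congr rfl fun b _ => ?_).trans (mul_sum ..).symm
  rw [sum_comm]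
  simp_rw [← mul_sum, horth, mul_ite, mul_zero, sum_ite_eq, mem_univ, if_true, mul_conj']
  ring

lemma norm_coe_apply_eq_one {G : Type*} [Group G] [Finite G] (χ : G →* ℂˣ) (g : G) :
    ‖(χ g : ℂ)‖ = 1 :=
  norm_eq_one_of_pow_eq_one (by rw [← Units.val_pow_eq_pow_val, ← map_pow, pow_card_eq_one',
    map_one, Units.val_one]) Nat.card_pos.ne'

section UnitsGaussSum

variable {R : Type*} [CommRing R] [Fintype R] [DecidableEq R]

noncomputable def unitsGaussSum (χ : Rˣ →* ℂˣ) (ψ : AddChar R ℂ) (c : R) : ℂ :=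
  ∑ b : Rˣ, (χ b : ℂ) * ψ (c * b)

lemma norm_unitsGaussSum_units_mul (χ : Rˣ →* ℂˣ) (ψ : AddChar R ℂ) (u : Rˣ) (c : R) :
    ‖unitsGaussSum χ ψ (u * c)‖ = ‖unitsGaussSum χ ψ c‖ := by
  have h : unitsGaussSum χ ψ c = χ u * unitsGaussSum χ ψ (u * c) := by
    rw [unitsGaussSum, unitsGaussSum, mul_sum, ← Equiv.sum_comp (Equiv.mulLeft u)]
    refine sum_congr rfl fun b _ => ?_
    simp only [Equiv.coe_mulLeft, map_mul, Units.val_mul]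
    ring_nf
  rw [h, norm_mul, norm_coe_apply_eq_one, one_mul]

lemma sum_norm_sq_unitsGaussSum {ψ : AddChar R ℂ} (hψ : ψ.IsPrimitive) (χ : Rˣ →* ℂˣ) :
    ∑ c : R, ‖unitsGaussSum χ ψ c‖ ^ 2 = Fintype.card R * Fintype.card Rˣ := by
  simp only [unitsGaussSum, sum_norm_sq_sum_units_mul_addChar hψ, norm_coe_apply_eq_one,
    one_pow, sum_const, card_univ, nsmul_eq_mul, mul_one]

lemma norm_unitsGaussSum_natCast_le [IsAddCyclic R] {ψ : AddChar R ℂ} (hψ : ψ.IsPrimitive)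
    (χ : Rˣ →* ℂˣ) {n : ℕ} (hn : 0 < n) :
    ‖unitsGaussSum χ ψ n‖ ≤ √(n * Fintype.card R) := by
  have hcount := card_mul_le_card_stabilizer_mul_sum (G := Rˣ)
    (fun c => ‖unitsGaussSum χ ψ c‖ ^ 2) (fun _ => sq_nonneg _)
    (fun u c => by rw [Units.smul_def, smul_eq_mul, norm_unitsGaussSum_units_mul]) (n : R)
  rw [sum_norm_sq_unitsGaussSum hψ, Nat.card_eq_fintype_card] at hcount
  have hstab : (Nat.card (stabilizer Rˣ (n : R)) : ℝ) ≤ n :=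
    mod_cast card_stabilizer_units_natCast_le hn
  have hunits : (0 : ℝ) < Fintype.card Rˣ := mod_cast Fintype.card_pos
  refine Real.le_sqrt_of_sq_le (le_of_mul_le_mul_left ?_ hunits)
  calc (Fintype.card Rˣ : ℝ) * ‖unitsGaussSum χ ψ n‖ ^ 2
      ≤ Nat.card (stabilizer Rˣ (n : R)) * (Fintype.card R * Fintype.card Rˣ) := hcount
    _ ≤ n * (Fintype.card R * Fintype.card Rˣ) := by gcongr
    _ = Fintype.card Rˣ * (n * Fintype.card R) := by ring

end UnitsGaussSum

/-- Gauss sum estimate: for a Dirichlet character `χ` modulo `d` (a homomorphism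
`(ℤ/dℤ)ˣ → ℂˣ`) and a positive integer `a`,
`|Σ_{b∈(ℤ/dℤ)ˣ} χ(b) e^{2πiab/d}| ≤ √(ad)`. -/
theorem stmt4 (d : ℕ) [NeZero d] (χ : (ZMod d)ˣ →* ℂˣ) (a : ℕ) (ha : 0 < a) :
    ‖(∑ b : (ZMod d)ˣ,
        (χ b : ℂ) * Complex.exp (2 * Real.pi * I * a * ((b : ZMod d).val : ℕ) / d))‖
      ≤ Real.sqrt (a * d) := by
  have hsum : ∑ b : (ZMod d)ˣ,
      (χ b : ℂ) * Complex.exp (2 * Real.pi * I * a * ((b : ZMod d).val : ℕ) / d)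
      = unitsGaussSum χ ZMod.stdAddChar (a : ZMod d) := by
    refine sum_congr rfl fun b _ => ?_
    have harg : ((a * (b : ZMod d).val : ℤ) : ZMod d) = a * (b : ZMod d) := by
      push_cast
      rw [ZMod.natCast_val, ZMod.cast_id]
    rw [← harg, ZMod.stdAddChar_coe]
    push_cast
    ring_nf
  rw [hsum]
  simpa only [ZMod.card] using norm_unitsGaussSum_natCast_le (ZMod.isPrimitive_stdAddChar d) χ ha
end

section
/- Fix positive integers g and a. For every ε > 0 there exists an integer d₀ such that for all d ≥ d₀ and every subgroup H of (ℤ/dℤ)ˣ of index at most 2g, one has |(1/|H|) Σ_{b∈H} e^{2πiab/d}| < ε. -/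
/-!
Write `T(u) = ∑_{b ∈ H} e(ub/d)` for `u ∈ ℤ/dℤ`. Orthogonality of additive characters gives
`∑_u |T(u)|² = d·|H|`, and `T` is constant on the orbit `aH`, which has at least `|H|/a` elements
because multiplication by `a` is at most `a`-to-one on the cyclic group `ℤ/dℤ`; hence
`|T(a)|² ≤ a·d`. On the other side `|H| ≥ φ(d)/(2g)` and `φ(d) ≥ d/(ω(d)+1)` with
`2^ω(d) ≤ d`, so `|T(a)|/|H| ≪ log d/√d → 0`.
-/

open Complex Finset Filter Topology Asymptotics

theorem Finset.card_le_mul_card_image_nsmul {G : Type*} [AddCommGroup G] [Fintype G]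
    [DecidableEq G] [IsAddCyclic G] (s : Finset G) {n : ℕ} (hn : 0 < n) :
    #s ≤ n * #(s.image (n • ·)) := by
  refine card_le_mul_card_image s n fun y hy => ?_
  obtain ⟨x₀, -, rfl⟩ := mem_image.1 hy
  calc #{x ∈ s | n • x = n • x₀} ≤ #{z : G | n • z = 0} :=
        card_le_card_of_injOn (· - x₀) (fun x hx => by simp_all [nsmul_sub])
          fun x _ y _ h => sub_left_injective h
    _ ≤ n := IsAddCyclic.card_nsmul_eq_zero_le hn

theorem Subgroup.sum_mul_coe_mul_eq {R M : Type*} [Monoid R] [AddCommMonoid M]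
    (H : Subgroup Rˣ) [Fintype H] (φ : R → M) (u : R) (h : H) :
    ∑ b : H, φ (u * (h : Rˣ) * (b : Rˣ)) = ∑ b : H, φ (u * (b : Rˣ)) :=
  Fintype.sum_equiv (Equiv.mulLeft h) _ _ fun b => by simp [mul_assoc]

namespace AddChar

variable {R : Type*} [CommRing R] [Fintype R] {ψ : AddChar R ℂ}

theorem sum_norm_sq_sum_mul_eq_s5 {ι : Type*} [Fintype ι] (hψ : ψ.IsPrimitive) {f : ι → R}
    (hf : Function.Injective f) :
    ∑ u, ‖∑ i, ψ (u * f i)‖ ^ 2 = Fintype.card R * Fintype.card ι := by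
  classical
  suffices h : ∑ u, ((‖∑ i, ψ (u * f i)‖ ^ 2 : ℝ) : ℂ) = Fintype.card R * Fintype.card ι by
    exact_mod_cast h
  calc ∑ u, ((‖∑ i, ψ (u * f i)‖ ^ 2 : ℝ) : ℂ)
      = ∑ i, ∑ j, ∑ u, ψ (u * (f i - f j)) := by
        simp_rw [ofReal_pow, ← mul_conj', map_sum, sum_mul_sum, ← map_neg_eq_conj,
          ← map_add_eq_mul, mul_sub, sub_eq_add_neg]
        rw [sum_comm]
        exact sum_congr rfl fun _ _ => sum_comm
    _ = Fintype.card R * Fintype.card ι := by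
        simp [sum_mulShift _ hψ, sub_eq_zero, hf.eq_iff, mul_comm]

theorem card_image_mul_mul_norm_sq_sum_le [DecidableEq R] (hψ : ψ.IsPrimitive)
    (H : Subgroup Rˣ) [Fintype H] (u : R) :
    #(univ.image fun b : H => u * (b : Rˣ)) * ‖∑ b : H, ψ (u * (b : Rˣ))‖ ^ 2
      ≤ Fintype.card R * Fintype.card H := by
  set T : R → ℂ := fun v => ∑ b : H, ψ (v * (b : Rˣ))
  have horbit : ∀ v ∈ univ.image fun b : H => u * (b : Rˣ), ‖T v‖ ^ 2 = ‖T u‖ ^ 2 := by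
    simp only [mem_image, mem_univ, true_and, forall_exists_index]
    rintro _ h rfl
    exact congrArg (‖·‖ ^ 2) (H.sum_mul_coe_mul_eq ψ u h)
  calc _ = ∑ v ∈ univ.image fun b : H => u * (b : Rˣ), ‖T v‖ ^ 2 := by
        rw [sum_congr rfl horbit, sum_const, nsmul_eq_mul]
    _ ≤ ∑ v, ‖T v‖ ^ 2 := sum_le_sum_of_subset_of_nonneg (subset_univ _) fun _ _ _ => by positivity
    _ = _ := sum_norm_sq_sum_mul_eq_s5 hψ (Units.val_injective.comp Subtype.val_injective)

end AddChar

theorem Finset.prod_le_card_add_one_mul_prod_sub_one (s : Finset ℕ) (hs : ∀ p ∈ s, 2 ≤ p) :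
    ∏ p ∈ s, p ≤ (#s + 1) * ∏ p ∈ s, (p - 1) := by
  induction s using Finset.induction_on_max with
  | empty => simp
  | insert a s ha ih =>
    have has : a ∉ s := fun h => lt_irrefl a (ha a h)
    have hcard : #s + 2 ≤ a := by
      have := card_le_card fun x hx => mem_Ico.2 ⟨hs x (mem_insert_of_mem hx), ha x hx⟩
      simp only [Nat.card_Ico] at this
      have := hs a (mem_insert_self a s)
      omega
    rw [prod_insert has, prod_insert has, card_insert_of_notMem has]
    calc a * ∏ p ∈ s, p ≤ a * ((#s + 1) * ∏ p ∈ s, (p - 1)) :=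
          Nat.mul_le_mul_left a (ih fun p hp => hs p (mem_insert_of_mem hp))
      _ ≤ (#s + 1 + 1) * ((a - 1) * ∏ p ∈ s, (p - 1)) := by
          rw [← mul_assoc, ← mul_assoc]
          gcongr ?_ * _
          obtain ⟨m, rfl⟩ : ∃ m, a = m + 1 := ⟨a - 1, by omega⟩
          rw [Nat.add_sub_cancel]
          nlinarith

theorem Nat.le_totient_mul_card_primeFactors_add_one (n : ℕ) :
    n ≤ n.totient * (#n.primeFactors + 1) := by
  have hpos : 0 < ∏ p ∈ n.primeFactors, (p - 1) :=
    prod_pos fun p hp => Nat.sub_pos_of_lt (prime_of_mem_primeFactors hp).one_lt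
  refine Nat.le_of_mul_le_mul_right ?_ hpos
  calc n * ∏ p ∈ n.primeFactors, (p - 1) = n.totient * ∏ p ∈ n.primeFactors, p :=
        (totient_mul_prod_primeFactors n).symm
    _ ≤ n.totient * ((#n.primeFactors + 1) * ∏ p ∈ n.primeFactors, (p - 1)) :=
        Nat.mul_le_mul_left _ <| prod_le_card_add_one_mul_prod_sub_one _ fun p hp =>
          (prime_of_mem_primeFactors hp).two_le
    _ = n.totient * (#n.primeFactors + 1) * ∏ p ∈ n.primeFactors, (p - 1) := by ring

theorem Nat.two_pow_card_primeFactors_le {n : ℕ} (hn : n ≠ 0) : 2 ^ #n.primeFactors ≤ n :=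
  calc 2 ^ #n.primeFactors = ∏ _p ∈ n.primeFactors, 2 := (prod_const 2).symm
    _ ≤ ∏ p ∈ n.primeFactors, p := prod_le_prod' fun _ hp => (prime_of_mem_primeFactors hp).two_le
    _ ≤ n := Nat.le_of_dvd (Nat.pos_of_ne_zero hn) (prod_primeFactors_dvd n)

theorem Nat.card_primeFactors_le_logb (n : ℕ) : (#n.primeFactors : ℝ) ≤ Real.logb 2 n := by
  rcases eq_or_ne n 0 with rfl | hn
  · simp
  exact (Nat.cast_le.2 (le_log_of_pow_le one_lt_two (two_pow_card_primeFactors_le hn))).trans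
    (Real.natLog_le_logb n 2)

theorem tendsto_logb_two_add_one_div_sqrt :
    Tendsto (fun x : ℝ => (Real.logb 2 x + 1) / √x) atTop (𝓝 0) := by
  have hlog : (fun x => Real.logb 2 x) =o[atTop] fun x => x ^ (1 / 2 : ℝ) :=
    ((isLittleO_log_rpow_atTop (by norm_num)).const_mul_left (Real.log 2)⁻¹).congr_left
      fun x => by rw [Real.logb, div_eq_inv_mul]
  have hone : (fun _ => (1 : ℝ)) =o[atTop] fun x => x ^ (1 / 2 : ℝ) :=
    (isLittleO_one_left_iff ℝ).2 <| tendsto_norm_atTop_atTop.comp (tendsto_rpow_atTop (by norm_num))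
  simpa [Real.sqrt_eq_rpow] using (hlog.add hone).tendsto_div_nhds_zero

theorem Nat.tendsto_card_primeFactors_add_one_div_sqrt :
    Tendsto (fun n : ℕ => (#n.primeFactors + 1 : ℝ) / √n) atTop (𝓝 0) :=
  squeeze_zero (fun n => by positivity)
    (fun n => div_le_div_of_nonneg_right (by linarith [card_primeFactors_le_logb n])
      (by positivity))
    (tendsto_logb_two_add_one_div_sqrt.comp tendsto_natCast_atTop_atTop)

namespace ZMod

theorem norm_sq_sum_stdAddChar_natCast_mul_le {d : ℕ} [NeZero d] (H : Subgroup (ZMod d)ˣ)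
    [Fintype H] {a : ℕ} (ha : 0 < a) :
    ‖∑ b : H, stdAddChar ((a : ZMod d) * ((b : (ZMod d)ˣ) : ZMod d))‖ ^ 2 ≤ a * d := by
  set S := univ.image fun b : H => (a : ZMod d) * ((b : (ZMod d)ˣ) : ZMod d)
  have hH : Fintype.card H ≤ a * #S := by
    have := (univ.image fun b : H => ((b : (ZMod d)ˣ) : ZMod d)).card_le_mul_card_image_nsmul ha
    have hinj : Function.Injective fun b : H => ((b : (ZMod d)ˣ) : ZMod d) :=
      Units.val_injective.comp Subtype.val_injective
    simpa only [card_image_of_injective _ hinj, card_univ, image_image, Function.comp_def,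
      nsmul_eq_mul] using this
  have hS : 0 < #S := (univ_nonempty.image _).card_pos
  have key := AddChar.card_image_mul_mul_norm_sq_sum_le (isPrimitive_stdAddChar d) H (a : ZMod d)
  rw [ZMod.card] at key
  refine le_of_mul_le_mul_left (key.trans ?_) (Nat.cast_pos.2 hS)
  calc (d : ℝ) * Fintype.card H ≤ d * (a * #S) := by gcongr; exact_mod_cast hH
    _ = #S * (a * d) := by ring

theorem finsum_exp_eq_sum_stdAddChar {d : ℕ} [NeZero d] (H : Subgroup (ZMod d)ˣ) [Fintype H]
    (a : ℕ) :
    ∑ᶠ b : H, exp (2 * Real.pi * I * a * ((b : (ZMod d)ˣ) : ZMod d).val / d)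
      = ∑ b : H, stdAddChar ((a : ZMod d) * ((b : (ZMod d)ˣ) : ZMod d)) := by
  rw [finsum_eq_sum_of_fintype]
  refine sum_congr rfl fun b _ => ?_
  have h : (a : ZMod d) * ((b : (ZMod d)ˣ) : ZMod d)
      = ((a * ((b : (ZMod d)ˣ) : ZMod d).val : ℕ) : ℤ) := by
    push_cast
    rw [natCast_zmod_val]
  rw [h, stdAddChar_coe]
  push_cast
  ring_nf

theorem norm_inv_card_mul_finsum_exp_le {d : ℕ} [NeZero d] (H : Subgroup (ZMod d)ˣ) {a : ℕ}
    (ha : 0 < a) :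
    ‖(1 / (Nat.card H : ℂ)) *
        ∑ᶠ b : H, exp (2 * Real.pi * I * a * ((b : (ZMod d)ˣ) : ZMod d).val / d)‖
      ≤ H.index * √a * ((#d.primeFactors + 1 : ℝ) / √d) := by
  have : Fintype H := Fintype.ofFinite H
  have hsum : ‖∑ b : H, stdAddChar ((a : ZMod d) * ((b : (ZMod d)ˣ) : ZMod d))‖ ≤ √a * √d := by
    rw [← Real.sqrt_mul (Nat.cast_nonneg a)]
    exact Real.le_sqrt_of_sq_le (norm_sq_sum_stdAddChar_natCast_mul_le H ha)
  have hcard : (Nat.card H * H.index : ℝ) = d.totient := by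
    exact_mod_cast H.card_mul_index.trans
      (Nat.card_eq_fintype_card.trans (card_units_eq_totient d))
  have htot : (d : ℝ) ≤ d.totient * (#d.primeFactors + 1) := by
    exact_mod_cast d.le_totient_mul_card_primeFactors_add_one
  have hH : (0 : ℝ) < Nat.card H := Nat.cast_pos.2 Nat.card_pos
  rw [finsum_exp_eq_sum_stdAddChar, norm_mul, norm_div, norm_one, Complex.norm_natCast, one_div,
    inv_mul_eq_div, div_le_iff₀ hH]
  calc _ ≤ √a * √d := hsum
    _ = √a * d / √d := by rw [mul_div_assoc, Real.div_sqrt]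
    _ ≤ √a * (d.totient * (#d.primeFactors + 1)) / √d := by gcongr
    _ = _ := by rw [← hcard]; field_simp

end ZMod

theorem stmt5_general (g a : ℕ) (ha : 0 < a) :
    ∀ ε : ℝ, 0 < ε → ∃ d₀ : ℕ, ∀ d : ℕ, d₀ ≤ d →
      ∀ H : Subgroup (ZMod d)ˣ, H.index ≤ 2 * g →
        ‖(1 / (Nat.card H : ℂ)) *
            ∑ᶠ b : H, Complex.exp (2 * Real.pi * I * a * ((b : (ZMod d)ˣ) : ZMod d).val / d)‖
          < ε := by
  intro ε hε
  have hlim : Tendsto (fun d : ℕ => 2 * g * √a * ((#d.primeFactors + 1 : ℝ) / √d)) atTop (𝓝 0) := by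
    simpa using Nat.tendsto_card_primeFactors_add_one_div_sqrt.const_mul (2 * g * √a)
  obtain ⟨d₀, hd₀⟩ := eventually_atTop.1 (hlim.eventually (gt_mem_nhds hε))
  refine ⟨d₀ + 1, fun d hd H hH => ?_⟩
  have : NeZero d := ⟨by omega⟩
  calc _ ≤ H.index * √a * ((#d.primeFactors + 1 : ℝ) / √d) :=
        ZMod.norm_inv_card_mul_finsum_exp_le H ha
    _ ≤ 2 * g * √a * ((#d.primeFactors + 1 : ℝ) / √d) := by gcongr; exact_mod_cast hH
    _ < ε := hd₀ d (by omega)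

/-- Weyl sum estimate: fix positive integers `g` and `a`.  For every `ε > 0` there is
`d₀` such that for all `d ≥ d₀` and every subgroup `H ≤ (ℤ/dℤ)ˣ` of index at most
`2g`, the normalized sum `|(1/|H|) Σ_{b∈H} e^{2πiab/d}|` is less than `ε`. -/
theorem stmt5 (g a : ℕ) (hg : 0 < g) (ha : 0 < a) :
    ∀ ε : ℝ, 0 < ε → ∃ d₀ : ℕ, ∀ d : ℕ, d₀ ≤ d →
      ∀ H : Subgroup (ZMod d)ˣ, H.index ≤ 2 * g →
        ‖(1 / (Nat.card H : ℂ)) *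
            ∑ᶠ b : H, Complex.exp (2 * Real.pi * I * a * ((b : (ZMod d)ˣ) : ZMod d).val / d)‖
          < ε :=
  stmt5_general g a ha
end

section
/- Let f ∈ ℂ[x] be a polynomial of degree n > 0 and let e be the largest positive integer such that f = f₀^e for some polynomial f₀ ∈ ℂ[x]. If d is a positive integer relatively prime to e, then the polynomial Y^d − f(x) is irreducible over the rational function field ℂ(x). -/
/-!
Since `-1` is a square in `ℂ(x)`, Capelli's criterion says that `Y ^ d - f` is irreducible
unless `f` is a `p`-th power in `ℂ(x)` for some prime `p ∣ d`; the criterion is proved by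
induction on the prime factors of `d`, descending to a root of `Y ^ p - f` by taking norms.
As `ℂ[x]` is integrally closed, a `p`-th root of `f` in `ℂ(x)` would be a polynomial, and
together with `f = f₀ ^ e` and `gcd(p, e) = 1` this would make `f` an `(e * p)`-th power,
contradicting the maximality of `e`.
-/

open Polynomial

theorem IsSquare.exists_pow_eq_neg_one {M : Type*} [Monoid M] [HasDistribNeg M]
    (h : IsSquare (-1 : M)) {q : ℕ} (hq : q.Prime) : ∃ ε : M, ε ^ q = -1 := by
  rcases hq.eq_two_or_odd' with rfl | hodd
  · obtain ⟨i, hi⟩ := h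
    exact ⟨i, by rw [pow_two, hi]⟩
  · exact ⟨-1, hodd.neg_one_pow⟩

open IntermediateField in
/-- When `-1` is a square, the exceptional case `a = -4b⁴` of Capelli's theorem is itself a
square, so no condition beyond the one for primes is needed. -/
theorem X_pow_sub_C_irreducible_of_isSquare_neg_one {K : Type*} [Field K]
    (hK : IsSquare (-1 : K)) {n : ℕ} (hn : n ≠ 0) {a : K}
    (ha : ∀ p : ℕ, p.Prime → p ∣ n → ∀ b : K, b ^ p ≠ a) :
    Irreducible (X ^ n - C a) := by
  induction n using induction_on_primes generalizing K a with
  | zero => exact absurd rfl hn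
  | one => simpa using irreducible_X_sub_C a
  | prime_mul p n hp IH =>
    rw [mul_comm]
    apply X_pow_mul_sub_C_irreducible
      (X_pow_sub_C_irreducible_of_prime hp (ha p hp (dvd_mul_right _ _)))
    intro E _ _ x hx
    have hint : IsIntegral K x := not_not.mp fun h ↦ by
      simpa only [degree_zero, degree_X_pow_sub_C hp.pos,
        WithBot.natCast_ne_bot] using congr_arg degree (hx.symm.trans (dif_neg h))
    refine IH (by simpa using hK.map (algebraMap K K⟮x⟯)) (right_ne_zero_of_mul hn)
      fun q hq hqn b hb ↦ ?_
    -- `b ^ q = x`, whose norm is read off the constant coefficient of its minimal polynomial.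
    have hnorm : Algebra.norm K b ^ q = (-1) ^ (p + 1) * a := by
      rw [← map_pow, hb, ← adjoin.powerBasis_gen hint,
        Algebra.PowerBasis.norm_gen_eq_coeff_zero_minpoly, adjoin.powerBasis_gen hint,
        adjoin.powerBasis_dim hint, minpoly_gen, hx, natDegree_X_pow_sub_C]
      simp [coeff_X_pow, hp.ne_zero.symm, pow_succ]
    obtain ⟨ε, hε⟩ := hK.exists_pow_eq_neg_one hq
    refine ha q hq (hqn.mul_left p) (ε ^ (p + 1) * Algebra.norm K b) ?_
    rw [mul_pow, ← pow_mul, mul_comm (p + 1) q, pow_mul, hε, hnorm, ← mul_assoc, ← mul_pow]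
    simp

theorem IsIntegrallyClosed.exists_eq_pow_of_algebraMap_eq_pow {R K : Type*} [CommRing R]
    [IsIntegrallyClosed R] [CommRing K] [Algebra R K] [IsFractionRing R K] {r : R} {x : K}
    {n : ℕ} (hn : n ≠ 0) (h : algebraMap R K r = x ^ n) : ∃ y : R, r = y ^ n := by
  obtain ⟨y, rfl⟩ := exists_algebraMap_eq_of_isIntegral_pow (Nat.pos_of_ne_zero hn)
    (h ▸ isIntegral_algebraMap)
  exact ⟨y, IsFractionRing.injective R K (by rw [h, map_pow])⟩

theorem stmt9_general (f : Polynomial ℂ)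
    (e : ℕ) (he : 0 < e) (hpow : ∃ f₀ : Polynomial ℂ, f = f₀ ^ e)
    (hmax : ∀ k : ℕ, 0 < k → (∃ h : Polynomial ℂ, f = h ^ k) → k ≤ e)
    (d : ℕ) (hd : 0 < d) (hcop : Nat.Coprime d e) :
    Irreducible (X ^ d - C (algebraMap (Polynomial ℂ) (RatFunc ℂ) f)) := by
  obtain ⟨f₀, rfl⟩ := hpow
  have hK : IsSquare (-1 : RatFunc ℂ) := ⟨algebraMap ℂ _ Complex.I, by
    rw [← map_mul, Complex.I_mul_I, map_neg, map_one]⟩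
  refine X_pow_sub_C_irreducible_of_isSquare_neg_one hK hd.ne' fun p hp hpd b hb ↦ ?_
  rw [map_pow] at hb
  obtain ⟨c, rfl, -⟩ := (pow_eq_pow_iff_of_coprime (hcop.coprime_dvd_left hpd)).mp hb
  obtain ⟨q, hq⟩ := IsIntegrallyClosed.exists_eq_pow_of_algebraMap_eq_pow
    (R := ℂ[X]) (K := RatFunc ℂ) (mul_ne_zero he.ne' hp.ne_zero) (by rw [map_pow, ← hb, pow_mul])
  have hle := hmax (e * p) (mul_pos he hp.pos) ⟨q, hq⟩
  nlinarith [hp.two_le]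

/-- Let `f ∈ ℂ[x]` be a polynomial of positive degree and let `e` be the largest
positive integer such that `f = f₀^e` for some polynomial `f₀`.  If `d` is a positive
integer relatively prime to `e`, then `Y^d − f` is irreducible over `ℂ(x)`. -/
theorem stmt9 (f : Polynomial ℂ) (hf : 0 < f.natDegree)
    (e : ℕ) (he : 0 < e) (hpow : ∃ f₀ : Polynomial ℂ, f = f₀ ^ e)
    (hmax : ∀ k : ℕ, 0 < k → (∃ h : Polynomial ℂ, f = h ^ k) → k ≤ e)
    (d : ℕ) (hd : 0 < d) (hcop : Nat.Coprime d e) :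
    Irreducible (X ^ d - C (algebraMap (Polynomial ℂ) (RatFunc ℂ) f)) :=
  stmt9_general f e he hpow hmax d hd hcop
end

section
/- The set {1, 5, 7, 11} is a subgroup of index 2 in (ℤ/24ℤ)ˣ, and every element of its nontrivial coset {13, 17, 19, 23} has least positive residue at least 12 = 24/2. Consequently, the constant d₀ in the equidistribution proposition for n = 2 and g = 1 cannot be taken smaller than 24. -/
def lowerHalfUnits24 : Subgroup (ZMod 24)ˣ where
  carrier := {x | (x : ZMod 24).val = 1 ∨ (x : ZMod 24).val = 5 ∨
      (x : ZMod 24).val = 7 ∨ (x : ZMod 24).val = 11}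
  mul_mem' := by decide
  one_mem' := by decide
  inv_mem' := by decide

instance : DecidablePred (· ∈ lowerHalfUnits24) := fun _ =>
  inferInstanceAs (Decidable (_ ∨ _ ∨ _ ∨ _))

lemma card_lowerHalfUnits24 : Nat.card lowerHalfUnits24 = 4 := by
  rw [Nat.card_eq_fintype_card]
  decide

lemma index_lowerHalfUnits24 : lowerHalfUnits24.index = 2 := by
  have h := lowerHalfUnits24.index_mul_card
  rw [card_lowerHalfUnits24, Nat.card_eq_fintype_card, ZMod.card_units_eq_totient] at h
  have htot : Nat.totient 24 = 8 := by decide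
  omega

lemma twelve_le_val_of_notMem_lowerHalfUnits24 :
    ∀ x : (ZMod 24)ˣ, x ∉ lowerHalfUnits24 → 12 ≤ (x : ZMod 24).val := by
  decide

lemma neg_one_notMem_lowerHalfUnits24 : (-1 : (ZMod 24)ˣ) ∉ lowerHalfUnits24 := by
  decide

/-- `{1, 5, 7, 11}` is a subgroup of index `2` in `(ℤ/24ℤ)ˣ`, every element of its
nontrivial coset has least positive residue at least `12 = 24/2`, and consequently
the equidistribution property (for `n = 2`, `g = 1`) fails at `d = 24`: the constant
`d₀` in the equidistribution proposition cannot be taken smaller than `24`. -/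
theorem stmt11 :
    (∃ H : Subgroup (ZMod 24)ˣ,
      (∀ x : (ZMod 24)ˣ, x ∈ H ↔
        ((x : ZMod 24).val = 1 ∨ (x : ZMod 24).val = 5 ∨
          (x : ZMod 24).val = 7 ∨ (x : ZMod 24).val = 11)) ∧
      H.index = 2 ∧
      (∀ x : (ZMod 24)ˣ, x ∉ H → 12 ≤ (x : ZMod 24).val)) ∧
    ¬ (∀ H : Subgroup (ZMod 24)ˣ, H.index ≤ 2 * 1 →
        ∀ x : (ZMod 24)ˣ, ∃ h ∈ H,
          0 < ((x * h : (ZMod 24)ˣ) : ZMod 24).val ∧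
            ((((x * h : (ZMod 24)ˣ) : ZMod 24).val : ℝ) < (24 : ℝ) / 2)) := by
  refine ⟨⟨lowerHalfUnits24, fun _ => Iff.rfl, index_lowerHalfUnits24,
    twelve_le_val_of_notMem_lowerHalfUnits24⟩, fun hall => ?_⟩
  obtain ⟨h, hh, -, hlt⟩ := hall lowerHalfUnits24 (by rw [index_lowerHalfUnits24]) (-1)
  have hcoset : -1 * h ∉ lowerHalfUnits24 :=
    (lowerHalfUnits24.mul_mem_cancel_right hh).not.mpr neg_one_notMem_lowerHalfUnits24
  have hge : (12 : ℝ) ≤ ((-1 * h : (ZMod 24)ˣ) : ZMod 24).val := by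
    exact_mod_cast twelve_le_val_of_notMem_lowerHalfUnits24 _ hcoset
  linarith
end
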